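/- Fix integers n ≥ 1 and 0 ≤ k ≤ n−1, a strictly decreasing function X₀ : {1,…,n} → ℤ, and let h : {0,…,k} × ℤ → ℝ be the unique function satisfying: (i) 2·h(l, z−1) − h(l, z) = h(l+1, z) for all 0 ≤ l < k and z ∈ ℤ; (ii) h(k, z) = 2^{z − X₀(n−k)} for all z ∈ ℤ; (iii) h(l, X₀(n−l)) = 0 for all 0 ≤ l < k. Let T be the operator on functions g : ℤ → ℝ given by (Tg)(z) = 2g(z−1) − g(z). Then for every 0 ≤ l ≤ n−1, (T^{l} h(0,·))(X₀(n−l)) = 1 if l = k and = 0 otherwise; moreover T^{l} h(0,·) is identically zero for every l with k < l. -/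
import Mathlib


/-- The operator `T = (Q*)^{-1}` acting on functions `g : ℤ → ℝ` by
`(Tg)(z) = 2g(z−1) − g(z)`. -/
noncomputable def Tker (g : ℤ → ℝ) : ℤ → ℝ := fun z => 2 * g (z - 1) - g z

/-- If `h = h^n_k` solves the initial–boundary value problem
(i) `2·h(l, z−1) − h(l, z) = h(l+1, z)` for `0 ≤ l < k`;
(ii) `h(k, z) = 2^{z − X₀(n−k)}`;
(iii) `h(l, X₀(n−l)) = 0` for `0 ≤ l < k`;
then for `0 ≤ l ≤ n−1` one has `(T^l h(0,·))(X₀(n−l)) = 1_{l=k}`, and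
`T^l h(0,·) ≡ 0` for every `l > k`. -/
theorem statement15 (n k : ℕ) (hn : 1 ≤ n) (hk : k ≤ n - 1) (X₀ : ℕ → ℤ)
    (hX : ∀ i j : ℕ, 1 ≤ i → i < j → j ≤ n → X₀ j < X₀ i)
    (h : ℕ → ℤ → ℝ)
    (hheat : ∀ l, l < k → ∀ z : ℤ, 2 * h l (z - 1) - h l z = h (l + 1) z)
    (hinit : ∀ z : ℤ, h k z = (2 : ℝ) ^ (z - X₀ (n - k)))
    (hbdry : ∀ l, l < k → h l (X₀ (n - l)) = 0) :
    (∀ l : ℕ, l ≤ n - 1 →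
      Tker^[l] (h 0) (X₀ (n - l)) = if l = k then 1 else 0) ∧
    (∀ l : ℕ, k < l → ∀ z : ℤ, Tker^[l] (h 0) z = 0) := by

  have key : ∀ l : ℕ, l ≤ k → Tker^[l] (h 0) = h l := by
    intro l hl
    induction l with
    | zero => rfl
    | succ m ih =>
      have hm : m ≤ k := Nat.le_of_succ_le hl
      rw [Function.iterate_succ_apply', ih hm]
      funext z
      simp only [Tker]
      exact hheat m (Nat.lt_of_succ_le hl) z
  have hzero : ∀ z : ℤ, Tker (h k) z = 0 := by
    intro z
    simp only [Tker, hinit]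
    have : (2 : ℝ) ^ (z - X₀ (n - k)) = 2 * 2 ^ (z - 1 - X₀ (n - k)) := by
      rw [show z - X₀ (n - k) = (z - 1 - X₀ (n - k)) + 1 by ring,
        zpow_add₀ (two_ne_zero) _ 1]
      ring
    rw [this]; ring
  have hzerol : ∀ l : ℕ, k < l → ∀ z : ℤ, Tker^[l] (h 0) z = 0 := by
    intro l hl
    obtain ⟨m, rfl⟩ := Nat.exists_eq_add_of_le (Nat.succ_le_of_lt hl)
    induction m with
    | zero =>
      intro z
      rw [show k + 1 + 0 = k + 1 from rfl, Function.iterate_succ_apply',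
        key k le_rfl]
      exact hzero z
    | succ p ih =>
      intro z
      rw [show k + 1 + (p + 1) = (k + 1 + p) + 1 by ring,
        Function.iterate_succ_apply']
      simp only [Tker]
      rw [ih (by omega), ih (by omega)]
      ring
  refine ⟨?_, hzerol⟩
  intro l hl
  rcases lt_trichotomy l k with hlt | rfl | hgt
  · rw [key l (le_of_lt hlt), if_neg (ne_of_lt hlt)]
    exact hbdry l hlt
  · rw [key l le_rfl, if_pos rfl, hinit, sub_self, zpow_zero]
  · rw [if_neg (ne_of_gt hgt)]
    exact hzerol l hgt _
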